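/- arXiv:2510.18015 — 5 statements merged into one kernel-verified Lean document; each statement's English description precedes it below -/
import Mathlib

section
/- Let d ≥ 1 be an integer. For every z ∈ ℂ with 0 < |z| < 1, the winding map h_d is real (Fréchet) differentiable at z, the operator norm of its derivative satisfies ‖Dh_d(z)‖ = d, and its minimal expansion satisfies min over unit vectors v of ‖Dh_d(z)v‖ = 1. For every z with |z| > 1, h_d is differentiable at z with ‖Dh_d(z)‖ = min over unit vectors v of ‖Dh_d(z)v‖ = d·|z|^{d−1}. -/
/-- The winding map of degree `d`: `h_d(z) = |z|^(1-d) * z^d` for `|z| ≤ 1`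
(so `h_d(r e^{it}) = r e^{idt}` there), and `h_d(z) = z^d` for `|z| ≥ 1`. -/
noncomputable def windingMap (d : ℕ) (z : ℂ) : ℂ :=
  if ‖z‖ ≤ 1 then ((‖z‖ ^ ((1 : ℝ) - (d : ℝ)) : ℝ) : ℂ) * z ^ d
  else z ^ d

/-! Inside the unit disc, logarithmic differentiation of `h_d(z) = |z|^(1-d) z^d` gives
`Dh_d(z) v = h_d(z) · S_d(v / z)`, where `S_d(x + iy) = x + i d y` stretches the imaginary direction
by the factor `d`. As `|h_d(z)| = |z|`, the expansion of `Dh_d(z)` in any direction equals that of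
`S_d`, which lies between `1` (attained radially) and `d` (attained tangentially). Outside the disc
`h_d(z) = z^d` is holomorphic, so its derivative is multiplication by `d z^(d-1)`, which expands
every direction equally. -/

open Complex ContinuousLinearMap

theorem ContinuousLinearMap.opNorm_eq_and_isLeast_of_bounds {𝕜 E F : Type*}
    [NontriviallyNormedField 𝕜] [NormedAddCommGroup E] [NormedSpace 𝕜 E] [NormedAddCommGroup F]
    [NormedSpace 𝕜 F] {L : E →L[𝕜] F} {m M : ℝ}
    (hm : ∀ v, m * ‖v‖ ≤ ‖L v‖) (hM : ∀ v, ‖L v‖ ≤ M * ‖v‖) {u w : E} (hu : ‖u‖ = 1)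
    (hLu : ‖L u‖ = m) (hw : ‖w‖ = 1) (hLw : ‖L w‖ = M) :
    ‖L‖ = M ∧ IsLeast {r : ℝ | ∃ v : E, ‖v‖ = 1 ∧ r = ‖L v‖} m := by
  refine ⟨le_antisymm (L.opNorm_le_bound (hLw ▸ norm_nonneg _) hM) (hLw ▸ L.unit_le_opNorm w hw.le),
    ⟨u, hu, hLu.symm⟩, ?_⟩
  rintro _ ⟨v, hv, rfl⟩
  simpa [hv] using hm v

theorem hasFDerivAt_norm_rpow_of_ne_zero {E : Type*} [NormedAddCommGroup E] [InnerProductSpace ℝ E]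
    {x : E} (hx : x ≠ 0) (p : ℝ) :
    HasFDerivAt (fun y : E => ‖y‖ ^ p) ((p * ‖x‖ ^ (p - 2)) • innerSL ℝ x) x := by
  have hsq : (fun y : E => ‖y‖ ^ p) = fun y => (‖y‖ ^ 2) ^ (p / 2) := by
    funext y
    rw [← Real.rpow_natCast, ← Real.rpow_mul (norm_nonneg y)]
    congr 1
    ring
  rw [hsq]
  convert (hasStrictFDerivAt_norm_sq x).hasFDerivAt.rpow_const (p := p / 2)
    (Or.inl (by positivity)) using 1
  rw [← Real.rpow_natCast, ← Real.rpow_mul (norm_nonneg x), ← ofNat_smul_eq_nsmul ℝ, smul_smul]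
  push_cast
  rw [show (2 : ℝ) * (p / 2 - 1) = p - 2 by ring]
  ring_nf

namespace Complex

noncomputable def stretchImCLM (a : ℝ) : ℂ →L[ℝ] ℂ :=
  reCLM.smulRight 1 + imCLM.smulRight (a * I)

@[simp]
theorem stretchImCLM_apply (a : ℝ) (w : ℂ) : stretchImCLM a w = w.re + a * w.im * I := by
  simp [stretchImCLM]
  ring

variable {a : ℝ}

theorem sq_norm_stretchImCLM_apply (w : ℂ) : ‖stretchImCLM a w‖ ^ 2 = w.re ^ 2 + (a * w.im) ^ 2 := by
  rw [stretchImCLM_apply, Complex.sq_norm, normSq_apply]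
  simp
  ring

theorem norm_le_norm_stretchImCLM (ha : 1 ≤ a) (w : ℂ) : ‖w‖ ≤ ‖stretchImCLM a w‖ := by
  rw [← pow_le_pow_iff_left₀ (norm_nonneg _) (norm_nonneg _) two_ne_zero,
    sq_norm_stretchImCLM_apply, Complex.sq_norm, normSq_apply]
  nlinarith [mul_le_mul_of_nonneg_right (one_le_pow₀ ha : 1 ≤ a ^ 2) (sq_nonneg w.im)]

theorem norm_stretchImCLM_le (ha : 1 ≤ a) (w : ℂ) : ‖stretchImCLM a w‖ ≤ a * ‖w‖ := by
  rw [← pow_le_pow_iff_left₀ (norm_nonneg _) (by positivity) two_ne_zero,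
    sq_norm_stretchImCLM_apply, mul_pow a ‖w‖, Complex.sq_norm, normSq_apply]
  nlinarith [mul_le_mul_of_nonneg_right (one_le_pow₀ ha : 1 ≤ a ^ 2) (sq_nonneg w.re)]

theorem opNorm_eq_and_isLeast_smul_stretchImCLM_comp_mul (ha : 1 ≤ a) {z c : ℂ} (hz : z ≠ 0)
    (hc : ‖c‖ = ‖z‖) :
    let L := c • (stretchImCLM a).comp (mul ℝ ℂ z⁻¹)
    ‖L‖ = a ∧ IsLeast {r : ℝ | ∃ v : ℂ, ‖v‖ = 1 ∧ r = ‖L v‖} 1 := by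
  intro L
  have hz₀ : 0 < ‖z‖ := norm_pos_iff.2 hz
  have hL : ∀ v, ‖L v‖ = ‖z‖ * ‖stretchImCLM a (z⁻¹ * v)‖ := by
    intro v
    simp only [L, smul_apply, comp_apply, mul_apply', norm_smul, hc]
  have hunit : ∀ x : ℂ, ‖z * (‖z‖⁻¹ • x)‖ = ‖x‖ := fun x => by
    rw [norm_mul, norm_smul, norm_inv, norm_norm, mul_inv_cancel_left₀ hz₀.ne']
  have hLunit : ∀ x : ℂ, ‖L (z * (‖z‖⁻¹ • x))‖ = ‖stretchImCLM a x‖ := fun x => by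
    rw [hL, inv_mul_cancel_left₀ hz, map_smul, norm_smul, norm_inv, norm_norm,
      mul_inv_cancel_left₀ hz₀.ne']
  refine opNorm_eq_and_isLeast_of_bounds (fun v => ?_) (fun v => ?_)
    ((hunit 1).trans norm_one) ((hLunit 1).trans (by simp)) ((hunit I).trans norm_I)
    ((hLunit I).trans (by simp [abs_of_pos (zero_lt_one.trans_le ha)]))
  · rw [hL, one_mul]
    calc ‖v‖ = ‖z‖ * ‖z⁻¹ * v‖ := by rw [norm_mul, norm_inv, mul_inv_cancel_left₀ hz₀.ne']
      _ ≤ _ := by gcongr; exact norm_le_norm_stretchImCLM ha _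
  · rw [hL]
    calc _ ≤ ‖z‖ * (a * ‖z⁻¹ * v‖) := by gcongr; exact norm_stretchImCLM_le ha _
      _ = a * ‖v‖ := by rw [norm_mul, norm_inv]; field_simp

theorem opNorm_eq_and_isLeast_smul_id (c : ℂ) :
    let L := c • ContinuousLinearMap.id ℝ ℂ
    ‖L‖ = ‖c‖ ∧ IsLeast {r : ℝ | ∃ v : ℂ, ‖v‖ = 1 ∧ r = ‖L v‖} ‖c‖ := by
  intro L
  have hL : ∀ v, ‖L v‖ = ‖c‖ * ‖v‖ := fun v => norm_smul c v
  exact opNorm_eq_and_isLeast_of_bounds (fun v => (hL v).ge) (fun v => (hL v).le) norm_one (by simp [hL]) norm_one (by simp [hL])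

end Complex

section WindingMap

variable {d : ℕ} {z : ℂ}

theorem windingMap_of_norm_le_one (hz : ‖z‖ ≤ 1) :
    windingMap d z = ((‖z‖ ^ ((1 : ℝ) - d) : ℝ) : ℂ) * z ^ d :=
  if_pos hz

theorem windingMap_of_one_lt_norm (hz : 1 < ‖z‖) : windingMap d z = z ^ d :=
  if_neg hz.not_ge

theorem norm_windingMap_of_norm_le_one (hz₀ : z ≠ 0) (hz₁ : ‖z‖ ≤ 1) : ‖windingMap d z‖ = ‖z‖ := by
  rw [windingMap_of_norm_le_one hz₁, norm_mul, norm_real, norm_pow, Real.norm_of_nonneg (by positivity),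
    ← Real.rpow_add_natCast (norm_ne_zero_iff.2 hz₀), sub_add_cancel, Real.rpow_one]

theorem hasFDerivAt_windingMap_of_norm_lt_one (hz₀ : z ≠ 0) (hz₁ : ‖z‖ < 1) :
    HasFDerivAt (windingMap d)
      (windingMap d z • (stretchImCLM d).comp (mul ℝ ℂ z⁻¹)) z := by
  have hnorm := ofRealCLM.hasFDerivAt.comp z (hasFDerivAt_norm_rpow_of_ne_zero hz₀ (1 - d))
  have hprod := hnorm.fun_mul (hasFDerivAt_pow (𝕜 := ℝ) d (x := z))
  have heq : windingMap d =ᶠ[nhds z] fun w => ((‖w‖ ^ ((1 : ℝ) - d) : ℝ) : ℂ) * w ^ d := by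
    filter_upwards [(isOpen_lt continuous_norm continuous_const).mem_nhds hz₁] with w hw
    exact windingMap_of_norm_le_one hw.le
  refine (hprod.congr_of_eventuallyEq heq).congr_fderiv ?_
  ext1 v
  obtain ⟨w, rfl⟩ : ∃ w, v = z * w := ⟨v / z, by field_simp⟩
  have hinner : inner ℝ z (z * w) = ‖z‖ ^ 2 * w.re := by
    rw [Complex.inner, mul_right_comm, mul_conj, ← Complex.sq_norm, re_ofReal_mul]
  have hpow : (d : ℂ) * z ^ (d - 1) * z = d * z ^ d := by
    cases d <;> simp [pow_succ, mul_assoc]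
  have hrpow : ((‖z‖ ^ ((1 : ℝ) - d - 2) : ℝ) : ℂ) * (‖z‖ : ℂ) ^ 2 = ((‖z‖ ^ ((1 : ℝ) - d) : ℝ) : ℂ) := by
    rw [← ofReal_pow, ← ofReal_mul, ← Real.rpow_natCast, ← Real.rpow_add (norm_pos_iff.2 hz₀)]
    norm_num
  simp only [Function.comp_apply, ofRealCLM_apply, nsmul_eq_mul, coe_smul, comp_smulₛₗ,
    Real.ringHom_apply, add_apply, smul_apply, id_apply, smul_eq_mul, real_smul, comp_apply,
    coe_innerSL_apply, hinner, ofReal_mul, ofReal_pow, windingMap_of_norm_le_one hz₁.le, mul_apply',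
    inv_mul_cancel_left₀ hz₀, stretchImCLM_apply, ofReal_natCast]
  push_cast
  -- with `v = z w` the left side is `h_d(z) (d w + (1 - d) Re w)`
  linear_combination (((‖z‖ ^ ((1 : ℝ) - d) : ℝ) : ℂ) * w) * hpow
    + (z ^ d * (1 - d) * w.re) * hrpow - (((‖z‖ ^ ((1 : ℝ) - d) : ℝ) : ℂ) * d * z ^ d) * re_add_im w

theorem hasFDerivAt_windingMap_of_one_lt_norm (hz : 1 < ‖z‖) :
    HasFDerivAt (windingMap d) ((d • z ^ (d - 1)) • ContinuousLinearMap.id ℝ ℂ) z := by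
  refine (hasFDerivAt_pow d).congr_of_eventuallyEq ?_
  filter_upwards [(isOpen_lt continuous_const continuous_norm).mem_nhds hz] with w hw
  exact windingMap_of_one_lt_norm hw

end WindingMap

/-- For `0 < |z| < 1` the winding map is real (Fréchet) differentiable at `z`, the operator
norm of its derivative is `d` and its minimal expansion over unit vectors is `1`.
For `|z| > 1` it is differentiable with maximal and minimal expansion both `d * |z|^(d-1)`. -/
theorem windingMap_fderiv_norms (d : ℕ) (hd : 1 ≤ d) :
    (∀ z : ℂ, 0 < ‖z‖ → ‖z‖ < 1 →
      ∃ L : ℂ →L[ℝ] ℂ, HasFDerivAt (windingMap d) L z ∧ ‖L‖ = (d : ℝ) ∧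
        IsLeast {r : ℝ | ∃ v : ℂ, ‖v‖ = 1 ∧ r = ‖L v‖} 1) ∧
    (∀ z : ℂ, 1 < ‖z‖ →
      ∃ L : ℂ →L[ℝ] ℂ, HasFDerivAt (windingMap d) L z ∧
        ‖L‖ = (d : ℝ) * ‖z‖ ^ (d - 1) ∧
        IsLeast {r : ℝ | ∃ v : ℂ, ‖v‖ = 1 ∧ r = ‖L v‖}
          ((d : ℝ) * ‖z‖ ^ (d - 1))) := by
  refine ⟨fun z hz₀ hz₁ => ?_, fun z hz => ?_⟩
  · have hz : z ≠ 0 := norm_pos_iff.1 hz₀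
    exact ⟨_, hasFDerivAt_windingMap_of_norm_lt_one hz hz₁,
      opNorm_eq_and_isLeast_smul_stretchImCLM_comp_mul (by exact_mod_cast hd) hz
        (norm_windingMap_of_norm_le_one hz hz₁.le)⟩
  · have hc : ‖d • z ^ (d - 1)‖ = (d : ℝ) * ‖z‖ ^ (d - 1) := by simp
    exact ⟨_, hasFDerivAt_windingMap_of_one_lt_norm hz, hc ▸ opNorm_eq_and_isLeast_smul_id _⟩
end

section
/- Let d ≥ 1 be an integer and θ₀ ∈ ℝ. For all points z and w of the sector of angle π/d of the unit disk, i.e. z, w ∈ {r·e^{iθ} : 0 ≤ r < 1, θ₀ − π/(2d) ≤ θ ≤ θ₀ + π/(2d)}, the winding map satisfies |z − w| ≤ |h_d(z) − h_d(w)| ≤ d·|z − w|. -/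
/-!
In polar coordinates `h_d` keeps radii and multiplies angles by `d`. By the law of cosines,
`‖r e^{ia} - s e^{ib}‖² = (r - s)² + 2 r s (1 - cos (a - b))`, so both bounds reduce to comparing
`1 - cos (d t)` with `1 - cos t` for `|t| ≤ π / d`: monotonicity of `cos` on `[0, π]` gives the
lower bound, and `|sin (d t / 2)| ≤ d |sin (t / 2)|` gives the upper one.
-/

open Real

lemma abs_sin_nat_mul_le (n : ℕ) (x : ℝ) : |sin (n * x)| ≤ n * |sin x| := by
  induction n with
  | zero => simp
  | succ n ih =>
    calc |sin ((n + 1 : ℕ) * x)| = |sin (n * x) * cos x + cos (n * x) * sin x| := by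
          push_cast; rw [add_mul, one_mul, sin_add]
      _ ≤ |sin (n * x)| * |cos x| + |cos (n * x)| * |sin x| := by
          rw [← abs_mul, ← abs_mul]; exact abs_add_le _ _
      _ ≤ |sin (n * x)| * 1 + 1 * |sin x| := by
          gcongr
          · exact abs_cos_le_one x
          · exact abs_cos_le_one _
      _ ≤ (n + 1 : ℕ) * |sin x| := by push_cast; linarith

lemma one_sub_cos_nat_mul_le (n : ℕ) (x : ℝ) : 1 - cos (n * x) ≤ n ^ 2 * (1 - cos x) := by
  have half_angle (y : ℝ) : 1 - cos y = 2 * sin (y / 2) ^ 2 := by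
    have h := cos_two_mul_eq_one_sub (y / 2)
    rw [mul_div_cancel₀ y two_ne_zero] at h
    linarith
  have hsin : sin (n * x / 2) ^ 2 ≤ n ^ 2 * sin (x / 2) ^ 2 := by
    rw [← sq_abs, ← sq_abs (sin (x / 2)), ← mul_pow, mul_div_assoc]
    gcongr
    exact abs_sin_nat_mul_le n (x / 2)
  rw [half_angle, half_angle]
  linarith

lemma cos_nat_mul_le_cos {n : ℕ} (hn : 1 ≤ n) {x : ℝ} (hx : n * |x| ≤ π) :
    cos (n * x) ≤ cos x := by
  have hn' : (1 : ℝ) ≤ n := by exact_mod_cast hn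
  rw [← cos_abs x, ← cos_abs (n * x), abs_mul, Nat.abs_cast]
  exact cos_le_cos_of_nonneg_of_le_pi (abs_nonneg x) hx (le_mul_of_one_le_left (abs_nonneg x) hn')

namespace Complex

lemma norm_ofReal_mul_exp_sub_sq (r s a b : ℝ) :
    ‖(r : ℂ) * exp (a * I) - (s : ℂ) * exp (b * I)‖ ^ 2 =
      r ^ 2 + s ^ 2 - 2 * r * s * Real.cos (a - b) := by
  rw [← normSq_eq_norm_sq, normSq_apply]
  simp only [sub_re, sub_im, mul_re, mul_im, ofReal_re, ofReal_im, exp_ofReal_mul_I_re,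
    exp_ofReal_mul_I_im, Real.cos_sub]
  nlinarith [Real.sin_sq_add_cos_sq a, Real.sin_sq_add_cos_sq b]

variable {r s : ℝ}

lemma norm_ofReal_mul_exp_sub_le_nat_mul (hrs : 0 ≤ r * s) {n : ℕ} (hn : 1 ≤ n) {a b : ℝ}
    (hab : n * |a - b| ≤ π) :
    ‖(r : ℂ) * exp (a * I) - (s : ℂ) * exp (b * I)‖ ≤
      ‖(r : ℂ) * exp ((n * a : ℝ) * I) - (s : ℂ) * exp ((n * b : ℝ) * I)‖ := by
  rw [← sq_le_sq₀ (norm_nonneg _) (norm_nonneg _), norm_ofReal_mul_exp_sub_sq,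
    norm_ofReal_mul_exp_sub_sq, ← mul_sub]
  have hcos := cos_nat_mul_le_cos hn hab
  nlinarith

lemma norm_nat_mul_ofReal_mul_exp_sub_le (hrs : 0 ≤ r * s) {n : ℕ} (hn : 1 ≤ n) (a b : ℝ) :
    ‖(r : ℂ) * exp ((n * a : ℝ) * I) - (s : ℂ) * exp ((n * b : ℝ) * I)‖ ≤
      n * ‖(r : ℂ) * exp (a * I) - (s : ℂ) * exp (b * I)‖ := by
  rw [← sq_le_sq₀ (norm_nonneg _) (by positivity), mul_pow, norm_ofReal_mul_exp_sub_sq,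
    norm_ofReal_mul_exp_sub_sq, ← mul_sub]
  have hcos := one_sub_cos_nat_mul_le n (a - b)
  have hn2 : (1 : ℝ) ≤ n ^ 2 := one_le_pow₀ (by exact_mod_cast hn)
  -- split both sides as `(r - s) ^ 2 + 2 r s (1 - cos _)`
  nlinarith [mul_le_mul_of_nonneg_left hcos (by positivity : 0 ≤ 2 * (r * s)),
    mul_nonneg (sub_nonneg.2 hn2) (sq_nonneg (r - s))]

end Complex

lemma windingMap_ofReal_mul_exp (d : ℕ) {r : ℝ} (hr0 : 0 ≤ r) (hr1 : r ≤ 1) (θ : ℝ) :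
    windingMap d (r * Complex.exp (θ * Complex.I)) =
      r * Complex.exp ((d * θ : ℝ) * Complex.I) := by
  have hnorm : ‖(r : ℂ) * Complex.exp (θ * Complex.I)‖ = r := by
    simp [Complex.norm_exp, abs_of_nonneg hr0]
  rw [windingMap, if_pos (hnorm.trans_le hr1), hnorm, mul_pow, ← Complex.exp_nat_mul]
  rcases hr0.eq_or_lt with rfl | hr
  · rcases d with _ | d <;> simp
  · have hrpow : r ^ ((1 : ℝ) - d) * r ^ d = r := by
      rw [← Real.rpow_natCast, ← Real.rpow_add hr, sub_add_cancel, Real.rpow_one]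
    calc ((r ^ ((1 : ℝ) - d) : ℝ) : ℂ) * ((r : ℂ) ^ d * Complex.exp (d * (θ * Complex.I)))
        = ((r ^ ((1 : ℝ) - d) * r ^ d : ℝ) : ℂ) * Complex.exp (d * (θ * Complex.I)) := by
          push_cast; ring
      _ = r * Complex.exp ((d * θ : ℝ) * Complex.I) := by
          rw [hrpow]; push_cast; ring_nf

/-- On every sector of angle `π/d` of the unit disk, the winding map `h_d` satisfies
`|z - w| ≤ |h_d(z) - h_d(w)| ≤ d * |z - w|`. -/
theorem windingMap_biLipschitz_on_sector (d : ℕ) (hd : 1 ≤ d) (θ₀ : ℝ) (z w : ℂ)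
    (hz : ∃ r θ : ℝ, 0 ≤ r ∧ r < 1 ∧
      θ₀ - Real.pi / (2 * d) ≤ θ ∧ θ ≤ θ₀ + Real.pi / (2 * d) ∧
      z = (r : ℂ) * Complex.exp (θ * Complex.I))
    (hw : ∃ r θ : ℝ, 0 ≤ r ∧ r < 1 ∧
      θ₀ - Real.pi / (2 * d) ≤ θ ∧ θ ≤ θ₀ + Real.pi / (2 * d) ∧
      w = (r : ℂ) * Complex.exp (θ * Complex.I)) :
    ‖z - w‖ ≤ ‖windingMap d z - windingMap d w‖ ∧
    ‖windingMap d z - windingMap d w‖ ≤ (d : ℝ) * ‖z - w‖ := by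
  obtain ⟨r, θ, hr0, hr1, hθ₁, hθ₂, rfl⟩ := hz
  obtain ⟨s, φ, hs0, hs1, hφ₁, hφ₂, rfl⟩ := hw
  have hdpos : (0 : ℝ) < d := by exact_mod_cast hd
  have hangle : d * |θ - φ| ≤ π := by
    rw [← le_div_iff₀' hdpos, abs_sub_le_iff]
    have : π / d = 2 * (π / (2 * d)) := by field_simp
    constructor <;> linarith
  rw [windingMap_ofReal_mul_exp d hr0 hr1.le, windingMap_ofReal_mul_exp d hs0 hs1.le]
  have hrs : 0 ≤ r * s := mul_nonneg hr0 hs0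
  exact ⟨Complex.norm_ofReal_mul_exp_sub_le_nat_mul hrs hd hangle,
    Complex.norm_nat_mul_ofReal_mul_exp_sub_le hrs hd θ φ⟩
end

section
/- Let d ≥ 1 be an integer. For every z ∈ ℂ with 0 < |z| < 1, the real Fréchet derivative of the winding map h_d at z has Jacobian determinant det Dh_d(z) = d, and consequently ‖Dh_d(z)‖² ≤ d·|det Dh_d(z)| (so h_d satisfies the K-quasi-regularity inequality with K = d on the punctured unit disk). For |z| > 1, h_d is complex-differentiable at z, so ‖Dh_d(z)‖² = |det Dh_d(z)| there. -/
/-! On the punctured unit disk `h_d(z) = |z|^(1-d) z^d`, whose real derivative is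
`w ↦ a w + b w̄` with Wirtinger derivatives of constant modulus `|a| = (d+1)/2`,
`|b| = (d-1)/2`. Hence `det Dh_d = |a|² - |b|² = d` and `‖Dh_d‖ ≤ |a| + |b| = d`.
Outside the disk `h_d(z) = z^d` is holomorphic, and the complex-linear map `w ↦ c w` has
operator norm `|c|` and real determinant `|c|²`. -/

open Complex ComplexConjugate Filter Topology

noncomputable def wirtingerCLM (a b : ℂ) : ℂ →L[ℝ] ℂ :=
  a • ContinuousLinearMap.id ℝ ℂ + b • conjCLE.toContinuousLinearMap

@[simp]
lemma wirtingerCLM_apply (a b w : ℂ) : wirtingerCLM a b w = a * w + b * conj w := by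
  simp [wirtingerCLM]

lemma det_wirtingerCLM (a b : ℂ) :
    LinearMap.det (wirtingerCLM a b).toLinearMap = ‖a‖ ^ 2 - ‖b‖ ^ 2 := by
  rw [← LinearMap.det_toMatrix basisOneI, Matrix.det_fin_two]
  simp [LinearMap.toMatrix_apply, ← normSq_eq_norm_sq, normSq_apply]
  ring

lemma norm_wirtingerCLM_le (a b : ℂ) : ‖wirtingerCLM a b‖ ≤ ‖a‖ + ‖b‖ := by
  refine ContinuousLinearMap.opNorm_le_bound _ (by positivity) fun w => ?_
  calc ‖a * w + b * conj w‖ ≤ ‖a * w‖ + ‖b * conj w‖ := norm_add_le _ _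
    _ = (‖a‖ + ‖b‖) * ‖w‖ := by simp only [norm_mul, norm_conj]; ring

lemma ContinuousLinearMap.restrictScalars_eq_wirtingerCLM (L : ℂ →L[ℂ] ℂ) :
    L.restrictScalars ℝ = wirtingerCLM (L 1) 0 := by
  ext w
  simpa [mul_comm] using L.map_smul w 1

lemma ContinuousLinearMap.sq_norm_restrictScalars_eq_abs_det (L : ℂ →L[ℂ] ℂ) :
    ‖L.restrictScalars ℝ‖ ^ 2 = |LinearMap.det (L.restrictScalars ℝ).toLinearMap| := by
  have hL : ‖L‖ = ‖L 1‖ := by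
    have : L = ContinuousLinearMap.toSpanSingleton ℂ (L 1) := ContinuousLinearMap.ext_ring (by simp)
    conv_lhs => rw [this]
    exact ContinuousLinearMap.norm_toSpanSingleton _
  rw [L.restrictScalars_eq_wirtingerCLM, det_wirtingerCLM, ← L.restrictScalars_eq_wirtingerCLM,
    ContinuousLinearMap.norm_restrictScalars, hL]
  simp

lemma hasFDerivAt_norm_rpow_of_ne_zero_s3 (p : ℝ) {z : ℂ} (hz : z ≠ 0) :
    HasFDerivAt (fun w : ℂ => ‖w‖ ^ p) ((p * ‖z‖ ^ (p - 2)) • innerSL ℝ z) z := by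
  have hr : 0 < ‖z‖ := norm_pos_iff.2 hz
  have h := (hasStrictFDerivAt_norm_sq z).hasFDerivAt.rpow_const (p := p / 2)
    (Or.inl (by positivity))
  have hsq {r : ℝ} (hr0 : 0 ≤ r) (q : ℝ) : (r ^ 2) ^ (q / 2) = r ^ q := by
    rw [← Real.rpow_natCast, ← Real.rpow_mul hr0]
    ring_nf
  simp only [hsq (norm_nonneg _)] at h
  refine h.congr_fderiv (ContinuousLinearMap.ext fun w => ?_)
  have : (‖z‖ ^ 2) ^ (p / 2 - 1) = ‖z‖ ^ (p - 2) := by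
    rw [show p / 2 - 1 = (p - 2) / 2 by ring, hsq hr.le]
  simp only [FunLike.coe_smul, Pi.smul_apply, this, smul_eq_mul]
  ring

-- `z ^ n / z` rather than `z ^ (n - 1)`, so that the formula also holds for `n = 0`.
lemma hasFDerivAt_norm_rpow_mul_pow (p : ℝ) (n : ℕ) {z : ℂ} (hz : z ≠ 0) :
    HasFDerivAt (fun w : ℂ => ((‖w‖ ^ p : ℝ) : ℂ) * w ^ n)
      (wirtingerCLM (((p / 2 + n) * ‖z‖ ^ p : ℝ) * z ^ n / z)
        ((p / 2 * ‖z‖ ^ p : ℝ) * z ^ n / conj z)) z := by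
  have h := (ofRealCLM.hasFDerivAt.comp z (hasFDerivAt_norm_rpow_of_ne_zero_s3 p hz)).mul
    ((hasDerivAt_pow n z).hasFDerivAt.restrictScalars ℝ)
  refine h.congr_fderiv (ContinuousLinearMap.ext fun w => ?_)
  have hr : 0 < ‖z‖ := norm_pos_iff.2 hz
  have hinner : (w.re * z.re + w.im * z.im : ℂ) = (conj z * w + z * conj w) / 2 := by
    apply Complex.ext <;> simp <;> ring
  have hpow : (n : ℂ) * z ^ (n - 1) * z = n * z ^ n := by
    cases n <;> simp [pow_succ, mul_assoc]
  have hz' : conj z ≠ 0 := (map_ne_zero _).2 hz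
  simp only [Function.comp_apply, ofRealCLM_apply, coe_smul, Real.rpow_sub hr, Real.rpow_ofNat,
    ContinuousLinearMap.comp_smulₛₗ, Real.ringHom_apply, add_apply, smul_apply,
    ContinuousLinearMap.coe_restrictScalars', ContinuousLinearMap.toSpanSingleton_apply,
    smul_eq_mul, real_smul, ContinuousLinearMap.comp_apply, coe_innerSL_apply, Complex.inner,
    mul_re, conj_re, conj_im, mul_neg, sub_neg_eq_add, ofReal_add, ofReal_mul, hinner, ofReal_div,
    ofReal_pow, ofReal_ofNat, ofReal_natCast, wirtingerCLM_apply]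
  rw [← mul_conj']
  field_simp
  linear_combination (2 * ((‖z‖ ^ p : ℝ) : ℂ) * w * conj z) * hpow

lemma windingMap_eventuallyEq_of_norm_lt_one {d : ℕ} {z : ℂ} (hz : ‖z‖ < 1) :
    windingMap d =ᶠ[𝓝 z] fun w => ((‖w‖ ^ ((1 : ℝ) - d) : ℝ) : ℂ) * w ^ d := by
  filter_upwards [continuous_norm.continuousAt.eventually_lt continuousAt_const hz] with w hw
  exact if_pos hw.le

lemma windingMap_eventuallyEq_of_one_lt_norm {d : ℕ} {z : ℂ} (hz : 1 < ‖z‖) :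
    windingMap d =ᶠ[𝓝 z] fun w => w ^ d := by
  filter_upwards [continuousAt_const.eventually_lt continuous_norm.continuousAt hz] with w hw
  exact if_neg hw.not_ge

lemma exists_hasFDerivAt_windingMap_eq_wirtingerCLM {d : ℕ} (hd : 1 ≤ d) {z : ℂ} (hz0 : z ≠ 0)
    (hz1 : ‖z‖ < 1) :
    ∃ a b : ℂ, HasFDerivAt (windingMap d) (wirtingerCLM a b) z ∧
      ‖a‖ = (d + 1) / 2 ∧ ‖b‖ = (d - 1) / 2 := by
  have hr : 0 < ‖z‖ := norm_pos_iff.2 hz0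
  have hunit : ‖z‖ ^ ((1 : ℝ) - d) * ‖z‖ ^ d / ‖z‖ = 1 := by
    rw [← Real.rpow_natCast, ← Real.rpow_add hr, sub_add_cancel, Real.rpow_one, div_self hr.ne']
  have hd_real : (1 : ℝ) ≤ d := by exact_mod_cast hd
  have hpos : 0 < ‖z‖ ^ ((1 : ℝ) - d) := Real.rpow_pos_of_pos hr _
  refine ⟨_, _, (hasFDerivAt_norm_rpow_mul_pow _ d hz0).congr_of_eventuallyEq
    (windingMap_eventuallyEq_of_norm_lt_one hz1), ?_, ?_⟩ <;>
    simp only [norm_div, norm_mul, norm_real, norm_pow, norm_conj, Real.norm_eq_abs,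
      abs_of_pos hpos]
  · rw [abs_of_pos (by linarith)]
    linear_combination ((d + 1) / 2 : ℝ) * hunit
  · rw [abs_of_nonpos (by linarith), abs_two]
    linear_combination ((d - 1) / 2 : ℝ) * hunit

lemma hasDerivAt_windingMap_of_one_lt_norm {d : ℕ} {z : ℂ} (hz : 1 < ‖z‖) :
    HasDerivAt (windingMap d) (d * z ^ (d - 1)) z :=
  (hasDerivAt_pow d z).congr_of_eventuallyEq (windingMap_eventuallyEq_of_one_lt_norm hz)

/-- On the punctured unit disk the real Fréchet derivative of `h_d` has Jacobian
determinant `d`, and `‖Dh_d(z)‖² ≤ d·|det Dh_d(z)|` (the `K`-quasi-regularity inequality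
with `K = d`).  For `|z| > 1` the map `h_d` is complex-differentiable, so there
`‖Dh_d(z)‖² = |det Dh_d(z)|`. -/
theorem windingMap_quasiregular_ineq (d : ℕ) (hd : 1 ≤ d) :
    (∀ z : ℂ, 0 < ‖z‖ → ‖z‖ < 1 →
      ∃ L : ℂ →L[ℝ] ℂ, HasFDerivAt (windingMap d) L z ∧
        LinearMap.det (L.toLinearMap) = (d : ℝ) ∧
        ‖L‖ ^ 2 ≤ (d : ℝ) * |LinearMap.det (L.toLinearMap)|) ∧
    (∀ z : ℂ, 1 < ‖z‖ →
      ∃ L : ℂ →L[ℂ] ℂ, HasFDerivAt (windingMap d) L z ∧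
        ‖L.restrictScalars ℝ‖ ^ 2 =
          |LinearMap.det ((L.restrictScalars ℝ).toLinearMap)|) := by
  refine ⟨fun z hz0 hz1 => ?_, fun z hz => ?_⟩
  · obtain ⟨a, b, hL, ha, hb⟩ :=
      exists_hasFDerivAt_windingMap_eq_wirtingerCLM hd (norm_pos_iff.1 hz0) hz1
    have hdet : LinearMap.det (wirtingerCLM a b).toLinearMap = d := by
      rw [det_wirtingerCLM, ha, hb]
      ring
    have hnorm : ‖wirtingerCLM a b‖ ≤ d :=
      (norm_wirtingerCLM_le a b).trans_eq (by rw [ha, hb]; ring)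
    refine ⟨_, hL, hdet, ?_⟩
    rw [hdet, abs_of_nonneg d.cast_nonneg, ← sq]
    gcongr
  · exact ⟨_, (hasDerivAt_windingMap_of_one_lt_norm hz).hasFDerivAt,
      ContinuousLinearMap.sq_norm_restrictScalars_eq_abs_det _⟩
end

section
/- For every integer d ≥ 1, the winding map h_d is d-Lipschitz on the closed unit disk: |h_d(z) − h_d(w)| ≤ d·|z − w| for all z, w ∈ ℂ with |z| ≤ 1 and |w| ≤ 1. -/
theorem norm_pow_sub_pow_le_of_norm_le_one {R : Type*} [SeminormedRing R] [NormOneClass R]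
    {x y : R} (hx : ‖x‖ ≤ 1) (hy : ‖y‖ ≤ 1) (n : ℕ) :
    ‖x ^ n - y ^ n‖ ≤ n * ‖x - y‖ := by
  induction n with
  | zero => simp
  | succ n ih =>
    have hyn : ‖y ^ n‖ ≤ 1 := (norm_pow_le y n).trans (pow_le_one₀ (norm_nonneg y) hy)
    calc ‖x ^ (n + 1) - y ^ (n + 1)‖ = ‖(x ^ n - y ^ n) * x + y ^ n * (x - y)‖ := by
          congr 1; noncomm_ring
      _ ≤ ‖x ^ n - y ^ n‖ * ‖x‖ + ‖y ^ n‖ * ‖x - y‖ :=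
          (norm_add_le _ _).trans (add_le_add (norm_mul_le _ _) (norm_mul_le _ _))
      _ ≤ n * ‖x - y‖ * 1 + 1 * ‖x - y‖ := by gcongr
      _ = (n + 1 : ℕ) * ‖x - y‖ := by push_cast; ring

section Cone

variable {E F : Type*} [NormedAddCommGroup E] [InnerProductSpace ℝ E]
  [NormedAddCommGroup F] [InnerProductSpace ℝ F]

theorem norm_smul_sub_smul_sq_of_norm_eq_one {x y : E} (hx : ‖x‖ = 1) (hy : ‖y‖ = 1)
    (r s : ℝ) : ‖r • x - s • y‖ ^ 2 = (r - s) ^ 2 + r * s * ‖x - y‖ ^ 2 := by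
  rw [norm_sub_sq_real, norm_sub_sq_real, norm_smul, norm_smul, real_inner_smul_left,
    real_inner_smul_right, hx, hy, mul_one, mul_one, Real.norm_eq_abs, Real.norm_eq_abs,
    sq_abs, sq_abs]
  ring

/-- The cone over a `c`-Lipschitz map between unit spheres is `c`-Lipschitz when `1 ≤ c`. -/
theorem norm_smul_sub_smul_le_of_norm_sub_le {x y : E} {x' y' : F} (hx : ‖x‖ = 1)
    (hy : ‖y‖ = 1) (hx' : ‖x'‖ = 1) (hy' : ‖y'‖ = 1) {c r s : ℝ} (hc : 1 ≤ c)
    (hrs : 0 ≤ r * s) (h : ‖x' - y'‖ ≤ c * ‖x - y‖) :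
    ‖r • x' - s • y'‖ ≤ c * ‖r • x - s • y‖ := by
  rw [← sq_le_sq₀ (norm_nonneg _) (by positivity), mul_pow,
    norm_smul_sub_smul_sq_of_norm_eq_one hx hy, norm_smul_sub_smul_sq_of_norm_eq_one hx' hy']
  have hc2 : 1 ≤ c ^ 2 := one_le_pow₀ hc
  have hsq : ‖x' - y'‖ ^ 2 ≤ c ^ 2 * ‖x - y‖ ^ 2 := by
    rw [← mul_pow]; exact pow_le_pow_left₀ (norm_nonneg _) h 2
  nlinarith [sq_nonneg (r - s), mul_le_mul_of_nonneg_left hsq hrs]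

end Cone

theorem windingMap_zero (d : ℕ) : windingMap d 0 = 0 := by
  rcases d with _ | d <;> simp [windingMap]

theorem windingMap_smul {r : ℝ} (hr₀ : 0 ≤ r) (hr₁ : r ≤ 1) {u : ℂ} (hu : ‖u‖ = 1) (d : ℕ) :
    windingMap d (r • u) = r • u ^ d := by
  rcases hr₀.eq_or_lt with rfl | hr
  · simp [windingMap_zero]
  have hnorm : ‖r • u‖ = r := by rw [norm_smul, hu, mul_one, Real.norm_of_nonneg hr.le]
  rw [windingMap, if_pos (by rwa [hnorm]), hnorm, smul_pow, Complex.real_smul,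
    Complex.real_smul, ← mul_assoc, ← Complex.ofReal_mul, ← Real.rpow_natCast,
    ← Real.rpow_add hr, sub_add_cancel, Real.rpow_one]

theorem Complex.norm_smul_exp_arg_mul_I (z : ℂ) : ‖z‖ • exp (arg z * I) = z := by
  rw [Complex.real_smul, norm_mul_exp_arg_mul_I]

/-- The winding map `h_d` is `d`-Lipschitz on the closed unit disk. -/
theorem windingMap_lipschitz_on_disk (d : ℕ) (hd : 1 ≤ d) (z w : ℂ)
    (hz : ‖z‖ ≤ 1) (hw : ‖w‖ ≤ 1) :
    ‖windingMap d z - windingMap d w‖ ≤ (d : ℝ) * ‖z - w‖ := by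
  set u := Complex.exp (z.arg * Complex.I)
  set v := Complex.exp (w.arg * Complex.I)
  have hu : ‖u‖ = 1 := Complex.norm_exp_ofReal_mul_I _
  have hv : ‖v‖ = 1 := Complex.norm_exp_ofReal_mul_I _
  rw [← Complex.norm_smul_exp_arg_mul_I z, ← Complex.norm_smul_exp_arg_mul_I w,
    windingMap_smul (norm_nonneg z) hz hu, windingMap_smul (norm_nonneg w) hw hv]
  exact norm_smul_sub_smul_le_of_norm_sub_le hu hv (by rw [norm_pow, hu, one_pow])
    (by rw [norm_pow, hv, one_pow]) (by exact_mod_cast hd) (by positivity)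
    (norm_pow_sub_pow_le_of_norm_le_one hu.le hv.le d)
end

section
/- Let f, g, h : ℂ → ℂ and z ∈ ℂ. Suppose h is complex-differentiable at z, g is real (Fréchet) differentiable at z′ := h(z), and f is complex-differentiable at z″ := g(z′). Then the weighted operator norm of the derivative of the composition satisfies the exact product formula ‖D(f ∘ g ∘ h)(z)‖_# = f^#(z″) · ‖Dg(z′)‖_# · h^#(z). -/
/-- The spherical derivative `f^#(w) = ((1 + |w|²)/(1 + |f(w)|²)) · |f'(w)|`. -/
noncomputable def sphDeriv (f : ℂ → ℂ) (w : ℂ) : ℝ :=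
  ((1 + ‖w‖ ^ 2) / (1 + ‖f w‖ ^ 2)) * ‖deriv f w‖

/-- The weighted operator norm `‖Dk(w)‖_# = ((1 + |w|²)/(1 + |k(w)|²)) · ‖Dk(w)‖`,
where `Dk(w)` is the real Fréchet derivative of `k` at `w`. -/
noncomputable def wOpNorm (k : ℂ → ℂ) (w : ℂ) : ℝ :=
  ((1 + ‖w‖ ^ 2) / (1 + ‖k w‖ ^ 2)) * ‖fderiv ℝ k w‖

/-! The real derivative of a holomorphic map at `w` is multiplication by its complex derivative
`c`, and composing an `ℝ`-linear map with multiplication by `c`, on either side, multiplies its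
operator norm by `|c|`. Hence `‖D(f ∘ g ∘ h)(z)‖ = |f'(z'')| ‖Dg(z')‖ |h'(z)|`, and the weights
`(1 + |·|²)` at `z'` and `z''` cancel in the product. -/

open ContinuousLinearMap

section

variable {E F : Type*} [NormedAddCommGroup E] [NormedSpace ℝ E]
  [NormedAddCommGroup F] [NormedSpace ℂ F]

theorem DifferentiableAt.fderiv_real_eq_toSpanSingleton {f : ℂ → F} {w : ℂ}
    (hf : DifferentiableAt ℂ f w) :
    fderiv ℝ f w = (toSpanSingleton ℂ (deriv f w)).restrictScalars ℝ := by
  rw [hf.fderiv_restrictScalars ℝ, toSpanSingleton_deriv]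

theorem norm_toSpanSingleton_restrictScalars_comp (v : F) (T : E →L[ℝ] ℂ) :
    ‖((toSpanSingleton ℂ v).restrictScalars ℝ).comp T‖ = ‖v‖ * ‖T‖ := by
  rw [← norm_norm v, ← norm_smul]
  refine opNorm_ext _ _ fun x => ?_
  simp only [comp_apply, coe_restrictScalars', toSpanSingleton_apply, smul_apply, norm_smul,
    norm_norm, mul_comm]

theorem norm_comp_toSpanSingleton_restrictScalars (T : ℂ →L[ℝ] F) (c : ℂ) :
    ‖T.comp ((toSpanSingleton ℂ c).restrictScalars ℝ)‖ = ‖T‖ * ‖c‖ := by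
  have hnorm : ‖(toSpanSingleton ℂ c).restrictScalars ℝ‖ = ‖c‖ := by
    rw [norm_restrictScalars, norm_toSpanSingleton]
  refine le_antisymm (hnorm ▸ opNorm_comp_le _ _) ?_
  rcases eq_or_ne c 0 with rfl | hc
  · simp
  have hT : T = (T.comp ((toSpanSingleton ℂ c).restrictScalars ℝ)).comp
      ((toSpanSingleton ℂ c⁻¹).restrictScalars ℝ) := by
    ext x
    simp [inv_mul_cancel_right₀ hc]
  have hTle := opNorm_comp_le (T.comp ((toSpanSingleton ℂ c).restrictScalars ℝ))
    ((toSpanSingleton ℂ c⁻¹).restrictScalars ℝ)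
  rw [← hT, norm_restrictScalars, norm_toSpanSingleton, norm_inv] at hTle
  rwa [← le_div_iff₀ (norm_pos_iff.mpr hc), div_eq_mul_inv]

theorem norm_fderiv_real_comp_left {f : ℂ → F} {g : E → ℂ} {w : E}
    (hf : DifferentiableAt ℂ f (g w)) (hg : DifferentiableAt ℝ g w) :
    ‖fderiv ℝ (f ∘ g) w‖ = ‖deriv f (g w)‖ * ‖fderiv ℝ g w‖ := by
  rw [fderiv_comp w (hf.restrictScalars ℝ) hg, hf.fderiv_real_eq_toSpanSingleton,
    norm_toSpanSingleton_restrictScalars_comp]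

theorem norm_fderiv_real_comp_right {g : ℂ → F} {h : ℂ → ℂ} {w : ℂ}
    (hg : DifferentiableAt ℝ g (h w)) (hh : DifferentiableAt ℂ h w) :
    ‖fderiv ℝ (g ∘ h) w‖ = ‖fderiv ℝ g (h w)‖ * ‖deriv h w‖ := by
  rw [fderiv_comp w hg (hh.restrictScalars ℝ), hh.fderiv_real_eq_toSpanSingleton,
    norm_comp_toSpanSingleton_restrictScalars]

end

theorem wOpNorm_comp_left {f k : ℂ → ℂ} {w : ℂ}
    (hf : DifferentiableAt ℂ f (k w)) (hk : DifferentiableAt ℝ k w) :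
    wOpNorm (f ∘ k) w = sphDeriv f (k w) * wOpNorm k w := by
  have hk_pos : 0 < 1 + ‖k w‖ ^ 2 := by positivity
  simp only [wOpNorm, sphDeriv, norm_fderiv_real_comp_left hf hk, Function.comp_apply]
  field_simp

theorem wOpNorm_comp_right {k h : ℂ → ℂ} {w : ℂ}
    (hk : DifferentiableAt ℝ k (h w)) (hh : DifferentiableAt ℂ h w) :
    wOpNorm (k ∘ h) w = wOpNorm k (h w) * sphDeriv h w := by
  have hh_pos : 0 < 1 + ‖h w‖ ^ 2 := by positivity
  simp only [wOpNorm, sphDeriv, norm_fderiv_real_comp_right hk hh, Function.comp_apply]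
  field_simp

/-- If `h` is complex-differentiable at `z`, `g` is real differentiable at `z' = h(z)`,
and `f` is complex-differentiable at `z'' = g(z')`, then
`‖D(f ∘ g ∘ h)(z)‖_# = f^#(z'') · ‖Dg(z')‖_# · h^#(z)`. -/
theorem wOpNorm_comp (f g h : ℂ → ℂ) (z : ℂ)
    (hh : DifferentiableAt ℂ h z)
    (hg : DifferentiableAt ℝ g (h z))
    (hf : DifferentiableAt ℂ f (g (h z))) :
    wOpNorm (fun x => f (g (h x))) z =
      sphDeriv f (g (h z)) * wOpNorm g (h z) * sphDeriv h z := by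
  have hgh : DifferentiableAt ℝ (g ∘ h) z := hg.comp z (hh.restrictScalars ℝ)
  change wOpNorm (f ∘ (g ∘ h)) z = _
  rw [wOpNorm_comp_left (k := g ∘ h) hf hgh, wOpNorm_comp_right hg hh, mul_assoc]
  rfl
end
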